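/- Let $(A,\Delta,\varepsilon)$ be a commutative $R$-bialgebra, $L$ an $(R,A)$-Lie algebra, and $\omega^{\otimes}\colon L\to\mathrm{Der}(A\otimes A)$ an action of the $R$-Lie algebra $L$ on $A\otimes A$ by derivations such that $\Delta$ is $L$-equivariant and $(a\alpha)(b\otimes c) = \Delta(a)\cdot\alpha(b\otimes c)$ for all $a,b,c\in A$, $\alpha\in L$. Then $L^{\otimes} = (A\otimes A)\otimes_A L$ acquires an $(R, A\otimes A)$-Lie algebra structure such that $(\Delta,\Delta\otimes\mathrm{Id})\colon(A,L)\to(A\otimes A, L^{\otimes})$ is a morphism of Lie-Rinehart algebras. -/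

import Mathlib

open TensorProduct

universe u v w x y

section LRdefs

variable (R : Type u) [CommRing R]

/-- `φ : A → A'` is (the function underlying) a morphism of `R`-algebras. -/
def IsAlgHomFun {A : Type v} {A' : Type w} [CommRing A] [Algebra R A] [Ring A']
    [Algebra R A'] (φ : A → A') : Prop :=
  IsLinearMap R φ ∧ φ 1 = 1 ∧ ∀ a b : A, φ (a * b) = φ a * φ b

/-- `(A, L)`, with `A`-action `sm` on `L`, bracket `br` and anchor `an`, is a
Lie-Rinehart algebra over `R` (an `(R,A)`-Lie algebra structure on `L`). -/
def IsLR (A : Type v) [CommRing A] [Algebra R A]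
    (L : Type w) [AddCommGroup L] [Module R L]
    (sm : A → L → L) (br : L → L → L) (an : L → A → A) : Prop :=
  (∀ a : A, IsLinearMap R (sm a)) ∧
  (∀ x : L, sm 1 x = x) ∧
  (∀ (a b : A) (x : L), sm (a * b) x = sm a (sm b x)) ∧
  (∀ (a b : A) (x : L), sm (a + b) x = sm a x + sm b x) ∧
  (∀ (r : R) (a : A) (x : L), sm (r • a) x = r • sm a x) ∧
  (∀ x : L, IsLinearMap R (br x)) ∧
  (∀ y : L, IsLinearMap R fun x : L => br x y) ∧
  (∀ x : L, br x x = 0) ∧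
  (∀ x y z : L, br x (br y z) = br (br x y) z + br y (br x z)) ∧
  (∀ x : L, IsLinearMap R (an x)) ∧
  (∀ a : A, IsLinearMap R fun x : L => an x a) ∧
  (∀ (x : L) (a b : A), an x (a * b) = an x a * b + a * an x b) ∧
  (∀ (x y : L) (a : A), an (br x y) a = an x (an y a) - an y (an x a)) ∧
  (∀ (a : A) (x : L) (b : A), an (sm a x) b = a * an x b) ∧
  (∀ (x : L) (a : A) (y : L), br x (sm a y) = sm a (br x y) + sm (an x a) y)

/-- `(φ, ψ)` is a morphism of Lie-Rinehart algebras. -/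
def IsLRHom {A : Type v} [CommRing A] [Algebra R A] {L : Type w} [AddCommGroup L]
    [Module R L] {A' : Type x} [CommRing A'] [Algebra R A'] {L' : Type y}
    [AddCommGroup L'] [Module R L']
    (sm : A → L → L) (br : L → L → L) (an : L → A → A)
    (sm' : A' → L' → L') (br' : L' → L' → L') (an' : L' → A' → A')
    (φ : A → A') (ψ : L → L') : Prop :=
  IsAlgHomFun R φ ∧ IsLinearMap R ψ ∧
  (∀ x y : L, ψ (br x y) = br' (ψ x) (ψ y)) ∧
  (∀ (a : A) (x : L), ψ (sm a x) = sm' (φ a) (ψ x)) ∧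
  (∀ (x : L) (a : A), φ (an x a) = an' (ψ x) (φ a))

/-- `(U, ιA, ιL)` is the universal algebra of the Lie-Rinehart algebra
`(A, L, sm, br, an)`: it satisfies the generating relations and is universal
among `R`-algebras equipped with such a pair of maps. -/
def IsUniversalLR (A : Type v) [CommRing A] [Algebra R A]
    (L : Type w) [AddCommGroup L] [Module R L]
    (sm : A → L → L) (br : L → L → L) (an : L → A → A)
    (U : Type x) [Ring U] [Algebra R U] (ιA : A → U) (ιL : L → U) : Prop :=
  IsAlgHomFun R ιA ∧ IsLinearMap R ιL ∧
  (∀ (a : A) (x : L), ιA a * ιL x = ιL (sm a x)) ∧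
  (∀ x y : L, ιL (br x y) = ιL x * ιL y - ιL y * ιL x) ∧
  (∀ (x : L) (a : A), ιL x * ιA a - ιA a * ιL x = ιA (an x a)) ∧
  ∀ (B : Type x) [Ring B] [Algebra R B] (φA : A → B) (φL : L → B),
    IsAlgHomFun R φA → IsLinearMap R φL →
    (∀ (a : A) (x : L), φA a * φL x = φL (sm a x)) →
    (∀ x y : L, φL (br x y) = φL x * φL y - φL y * φL x) →
    (∀ (x : L) (a : A), φL x * φA a - φA a * φL x = φA (an x a)) →
    ∃! f : U →ₐ[R] B, (∀ a : A, f (ιA a) = φA a) ∧ ∀ x : L, f (ιL x) = φL x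

end LRdefs

/-!
Bundle the action as an `A`-linear map `ω : L →ₗ[A] Der_R(B)`; its `A`-linearity is the condition
`(aα)(u) = Δ(a)·α(u)`. The anchor is the `B`-linear extension `u ⊗ α ↦ u • ω α` of `ω`. The bracket
formula is compatible with `u·Δ(a) ⊗ α = u ⊗ aα` because of the Leibniz rule
`[α, aβ] = a[α, β] + α(a)β` in `L` together with the equivariance `ω α (Δ a) = Δ (α(a))`.
Every remaining axiom is additive in each argument, so it suffices to check it on pure tensors,
where it follows from the corresponding axiom of `L` or of `ω`; e.g. the Jacobi identity and the
compatibility of the anchor with brackets come from `ω [α, β] = [ω α, ω β]`.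
-/

namespace TensorProduct

variable {A : Type*} [CommRing A] {M N : Type*} [AddCommGroup M] [Module A M]
  [AddCommGroup N] [Module A N]

@[ext] theorem addMonoidHom_ext {P : Type*} [AddZeroClass P] {f g : M ⊗[A] N →+ P}
    (h : ∀ (m : M) (n : N), f (m ⊗ₜ n) = g (m ⊗ₜ n)) : f = g := by
  ext z
  induction z using TensorProduct.induction_on with
  | zero => simp only [map_zero]
  | tmul m n => exact h m n
  | add z₁ z₂ h₁ h₂ => simp only [map_add, h₁, h₂]

theorem induction_on_tmul₂ {p : M ⊗[A] N → M ⊗[A] N → Prop} (z w : M ⊗[A] N)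
    (tmul : ∀ (m : M) (n : N) (m' : M) (n' : N), p (m ⊗ₜ n) (m' ⊗ₜ n'))
    (add_left : ∀ z₁ z₂ w, p z₁ w → p z₂ w → p (z₁ + z₂) w)
    (add_right : ∀ z w₁ w₂, p z w₁ → p z w₂ → p z (w₁ + w₂)) : p z w := by
  have tmul_left (m : M) (n : N) : p (m ⊗ₜ n) w := by
    induction w using TensorProduct.induction_on with
    | zero => simpa only [zero_tmul] using tmul m n 0 0
    | tmul m' n' => exact tmul m n m' n'
    | add w₁ w₂ h₁ h₂ => exact add_right _ _ _ h₁ h₂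
  induction z using TensorProduct.induction_on with
  | zero => simpa only [zero_tmul] using tmul_left 0 0
  | tmul m n => exact tmul_left m n
  | add z₁ z₂ h₁ h₂ => exact add_left _ _ _ h₁ h₂

end TensorProduct

theorem AlgHom.isAlgHomFun {R : Type*} [CommRing R] {A : Type*} [CommRing A] [Algebra R A]
    {A' : Type*} [Ring A'] [Algebra R A'] (f : A →ₐ[R] A') : IsAlgHomFun R f :=
  ⟨f.toLinearMap.isLinear, map_one f, map_mul f⟩

namespace IsLR

variable {R : Type*} [CommRing R] {A : Type*} [CommRing A] [Algebra R A]
  {L : Type*} [AddCommGroup L] [Module R L] {sm : A → L → L} {br : L → L → L}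
  {an : L → A → A}

theorem br_add (h : IsLR R A L sm br an) (x y z : L) : br x (y + z) = br x y + br x z :=
  (h.2.2.2.2.2.1 x).map_add y z

theorem add_br (h : IsLR R A L sm br an) (x y z : L) : br (x + y) z = br x z + br y z :=
  (h.2.2.2.2.2.2.1 z).map_add x y

theorem br_self (h : IsLR R A L sm br an) (x : L) : br x x = 0 :=
  h.2.2.2.2.2.2.2.1 x

theorem leibniz_br (h : IsLR R A L sm br an) (x y z : L) :
    br x (br y z) = br (br x y) z + br y (br x z) :=
  h.2.2.2.2.2.2.2.2.1 x y z

theorem br_sm (h : IsLR R A L sm br an) (x : L) (a : A) (y : L) :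
    br x (sm a y) = sm a (br x y) + sm (an x a) y :=
  h.2.2.2.2.2.2.2.2.2.2.2.2.2.2 x a y

theorem br_skew (h : IsLR R A L sm br an) (x y : L) : -br y x = br x y := by
  have h₀ := h.br_self (x + y)
  rw [h.add_br, h.br_add, h.br_add, h.br_self, h.br_self, zero_add, add_zero] at h₀
  exact neg_eq_of_add_eq_zero_left h₀

theorem sm_br (h : IsLR R A L sm br an) (a : A) (x y : L) :
    br (sm a x) y = sm a (br x y) - sm (an y a) x := by
  rw [← h.br_skew, h.br_sm, ← h.br_skew y x, (h.1 a).map_neg]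
  abel

end IsLR

section

variable {R : Type*} [CommRing R] {A : Type*} [CommRing A] [Algebra R A]
  {B : Type*} [CommRing B] [Algebra R B] [Algebra A B] [IsScalarTower R A B]
  {L : Type*} [AddCommGroup L] [Module A L]

theorem derivation_apply_algebraMap_mul {an : L → A → A} {ω : L →ₗ[A] Derivation R B B}
    (hω : ∀ x a, ω x (algebraMap A B a) = algebraMap A B (an x a)) (x : L) (a : A) (v : B) :
    ω x (algebraMap A B a * v) = algebraMap A B (an x a) * v + algebraMap A B a * ω x v := by
  rw [Derivation.leibniz, hω, smul_eq_mul, smul_eq_mul]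
  ring

theorem LinearMap.liftBaseChange_tmul_derivation_apply (ω : L →ₗ[A] Derivation R B B)
    (u : B) (α : L) (v : B) : ω.liftBaseChange B (u ⊗ₜ α) v = u * ω α v := by
  rw [LinearMap.liftBaseChange_tmul, Derivation.smul_apply, smul_eq_mul]

noncomputable def derivationAction (ω' : L → B → B) (hlin : ∀ x, IsLinearMap R (ω' x))
    (hadd : ∀ x y u, ω' (x + y) u = ω' x u + ω' y u)
    (hder : ∀ x u v, ω' x (u * v) = ω' x u * v + u * ω' x v)
    (hsmul : ∀ (a : A) x u, ω' (a • x) u = algebraMap A B a * ω' x u) :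
    L →ₗ[A] Derivation R B B where
  toFun x := Derivation.mk' ((hlin x).mk' _) fun u v => by
    simp only [IsLinearMap.mk'_apply, hder, smul_eq_mul]
    ring
  map_add' x y := Derivation.ext (hadd x y)
  map_smul' a x := Derivation.ext fun u => by
    rw [RingHom.id_apply, Derivation.smul_apply, Algebra.smul_def]
    exact hsmul a x u

end

namespace IsLR

variable {R : Type*} [CommRing R] {A : Type*} [CommRing A] [Algebra R A]
  {B : Type*} [CommRing B] [Algebra R B] [Algebra A B] [IsScalarTower R A B]
  {L : Type*} [AddCommGroup L] [Module R L] [Module A L] {br : L → L → L} {an : L → A → A}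
  (h : IsLR R A L (fun a x => a • x) br an) (ω : L →ₗ[A] Derivation R B B)
  (hω : ∀ x a, ω x (algebraMap A B a) = algebraMap A B (an x a))

noncomputable def baseChangeBrTmul (u : B) (α : L) : B ⊗[A] L →+ B ⊗[A] L :=
  liftAddHom
    (AddMonoidHom.mk' (fun v => AddMonoidHom.mk'
      (fun β => (u * v) ⊗ₜ br α β - (v * ω β u) ⊗ₜ α + (u * ω α v) ⊗ₜ β)
      (fun β β' => by
        simp only [h.br_add, map_add, Derivation.add_apply, tmul_add, mul_add, add_tmul]
        abel))
      (fun v v' => by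
        ext β
        simp only [AddMonoidHom.mk'_apply, AddMonoidHom.add_apply, map_add, mul_add, add_mul,
          add_tmul]
        abel))
    (fun a v β => by
      simp only [AddMonoidHom.mk'_apply, h.br_sm, map_smul, Derivation.smul_apply, tmul_add,
        ← smul_tmul, Algebra.smul_def, derivation_apply_algebraMap_mul hω, mul_add, add_tmul]
      ring_nf
      abel)

@[simp] theorem baseChangeBrTmul_tmul (u v : B) (α β : L) :
    baseChangeBrTmul h ω hω u α (v ⊗ₜ β) =
      (u * v) ⊗ₜ br α β - (v * ω β u) ⊗ₜ α + (u * ω α v) ⊗ₜ β :=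
  rfl

noncomputable def baseChangeBr : B ⊗[A] L →+ B ⊗[A] L →+ B ⊗[A] L :=
  liftAddHom
    (AddMonoidHom.mk' (fun u => AddMonoidHom.mk' (baseChangeBrTmul h ω hω u)
      (fun α α' => by
        ext v β
        simp only [baseChangeBrTmul_tmul, AddMonoidHom.add_apply, h.add_br, map_add,
          Derivation.add_apply, add_tmul, tmul_add, mul_add]
        abel))
      (fun u u' => by
        ext α v β
        simp only [AddMonoidHom.mk'_apply, baseChangeBrTmul_tmul, AddMonoidHom.add_apply,
          map_add, add_tmul, mul_add, add_mul]
        abel))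
    (fun a u α => by
      ext v β
      simp only [AddMonoidHom.mk'_apply, baseChangeBrTmul_tmul, h.sm_br, map_smul,
        Derivation.smul_apply, tmul_sub, ← smul_tmul, Algebra.smul_def,
        derivation_apply_algebraMap_mul hω, mul_add, add_tmul]
      ring_nf
      abel)

local notation "⁅" z ", " w "⁆ₜ" => baseChangeBr h ω hω z w
local notation "ρ" => LinearMap.liftBaseChange B ω

@[simp] theorem baseChangeBr_tmul (u v : B) (α β : L) :
    ⁅u ⊗ₜ α, v ⊗ₜ β⁆ₜ = (u * v) ⊗ₜ br α β - (v * ω β u) ⊗ₜ α + (u * ω α v) ⊗ₜ β :=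
  rfl

theorem neg_baseChangeBr_swap (z w : B ⊗[A] L) : -⁅w, z⁆ₜ = ⁅z, w⁆ₜ := by
  induction z, w using induction_on_tmul₂ with
  | tmul u α v β =>
    simp only [baseChangeBr_tmul, ← h.br_skew α β, tmul_neg, mul_comm]
    abel
  | add_left z₁ z₂ w h₁ h₂ => simp only [map_add, AddMonoidHom.add_apply, neg_add, h₁, h₂]
  | add_right z w₁ w₂ h₁ h₂ => simp only [map_add, AddMonoidHom.add_apply, neg_add, h₁, h₂]

theorem baseChangeBr_self (z : B ⊗[A] L) : ⁅z, z⁆ₜ = 0 := by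
  induction z using TensorProduct.induction_on with
  | zero => simp only [map_zero]
  | tmul u α => simp only [baseChangeBr_tmul, h.br_self, tmul_zero, zero_sub, neg_add_cancel]
  | add z₁ z₂ h₁ h₂ =>
    simp only [map_add, AddMonoidHom.add_apply, h₁, h₂]
    rw [← neg_baseChangeBr_swap h ω hω z₁ z₂]
    abel

theorem baseChangeBr_smul_right (c : B) (z w : B ⊗[A] L) :
    ⁅z, c • w⁆ₜ = c • ⁅z, w⁆ₜ + ρ z c • w := by
  induction z, w using induction_on_tmul₂ with
  | tmul u α v β =>
    simp only [smul_tmul', baseChangeBr_tmul, LinearMap.liftBaseChange_tmul_derivation_apply,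
      smul_eq_mul, Derivation.leibniz, smul_sub, smul_add, mul_add, add_tmul]
    ring_nf
    abel
  | add_left z₁ z₂ w h₁ h₂ =>
    simp only [map_add, AddMonoidHom.add_apply, Derivation.add_apply, h₁, h₂, smul_add,
      add_smul]
    abel
  | add_right z w₁ w₂ h₁ h₂ => simp only [smul_add, map_add, h₁, h₂]; abel

theorem baseChangeBr_smul (r : R) (z w : B ⊗[A] L) : ⁅z, r • w⁆ₜ = r • ⁅z, w⁆ₜ := by
  rw [← algebraMap_smul B r w, baseChangeBr_smul_right, Derivation.map_algebraMap, zero_smul,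
    add_zero, algebraMap_smul]

theorem liftBaseChange_baseChangeBr (hbr : ∀ x y, ω (br x y) = ⁅ω x, ω y⁆) (z w : B ⊗[A] L) :
    ρ ⁅z, w⁆ₜ = ⁅ρ z, ρ w⁆ := by
  induction z, w using induction_on_tmul₂ with
  | tmul u α v β =>
    ext c
    simp only [baseChangeBr_tmul, map_add, map_sub, Derivation.add_apply, Derivation.sub_apply,
      LinearMap.liftBaseChange_tmul_derivation_apply, Derivation.commutator_apply, hbr,
      Derivation.leibniz, smul_eq_mul]
    ring
  | add_left z₁ z₂ w h₁ h₂ => simp only [map_add, AddMonoidHom.add_apply, h₁, h₂, add_lie]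
  | add_right z w₁ w₂ h₁ h₂ => simp only [map_add, h₁, h₂, lie_add]

theorem baseChangeBr_leibniz (hbr : ∀ x y, ω (br x y) = ⁅ω x, ω y⁆) (x y z : B ⊗[A] L) :
    ⁅x, ⁅y, z⁆ₜ⁆ₜ = ⁅⁅x, y⁆ₜ, z⁆ₜ + ⁅y, ⁅x, z⁆ₜ⁆ₜ := by
  induction x using TensorProduct.induction_on with
  | zero => simp only [map_zero, AddMonoidHom.zero_apply, add_zero]
  | add x₁ x₂ h₁ h₂ => simp only [map_add, AddMonoidHom.add_apply, h₁, h₂]; abel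
  | tmul u α =>
    induction y, z using induction_on_tmul₂ with
    | tmul v β w γ =>
      simp only [baseChangeBr_tmul, map_add, map_sub, AddMonoidHom.add_apply,
        AddMonoidHom.sub_apply]
      rw [h.leibniz_br α β γ, ← h.br_skew β α]
      simp only [Derivation.leibniz, hbr, Derivation.commutator_apply, smul_eq_mul, tmul_add,
        tmul_neg, add_tmul, sub_tmul, mul_add, mul_sub, mul_comm, mul_assoc, mul_left_comm]
      abel
    | add_left y₁ y₂ z h₁ h₂ => simp only [map_add, AddMonoidHom.add_apply, h₁, h₂]; abel
    | add_right y z₁ z₂ h₁ h₂ => simp only [map_add, h₁, h₂]; abel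

theorem baseChange (hbr : ∀ x y, ω (br x y) = ⁅ω x, ω y⁆) :
    IsLR R B (B ⊗[A] L) (fun c z => c • z) (fun z w => ⁅z, w⁆ₜ) (fun z v => ρ z v) := by
  refine ⟨fun c => ⟨smul_add c, smul_comm c⟩, one_smul B, mul_smul, add_smul, smul_assoc,
    fun z => ⟨map_add _, fun r w => baseChangeBr_smul h ω hω r z w⟩,
    fun w => ⟨fun z z' => by simp only [map_add, AddMonoidHom.add_apply], fun r z => ?_⟩,
    baseChangeBr_self h ω hω, baseChangeBr_leibniz h ω hω hbr,
    fun z => (ρ z : B →ₗ[R] B).isLinear,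
    fun v => ⟨fun z z' => by simp only [map_add, Derivation.add_apply], fun r z => ?_⟩,
    fun z u v => ?_, fun z w c => ?_, fun c z v => ?_,
    fun z c w => baseChangeBr_smul_right h ω hω c z w⟩
  all_goals dsimp only
  · rw [← neg_baseChangeBr_swap h ω hω z, ← neg_baseChangeBr_swap h ω hω (r • z),
      baseChangeBr_smul, smul_neg]
  · rw [← algebraMap_smul B r z, map_smul, Derivation.smul_apply, algebraMap_smul]
  · rw [Derivation.leibniz, smul_eq_mul, smul_eq_mul, add_comm, mul_comm]
  · rw [liftBaseChange_baseChangeBr h ω hω hbr, Derivation.commutator_apply]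
  · rw [map_smul, Derivation.smul_apply, smul_eq_mul]

theorem isLRHom_baseChange [IsScalarTower R A L] :
    IsLRHom R (fun a x => a • x) br an (fun c z => c • z) (fun z w => ⁅z, w⁆ₜ)
      (fun z v => ρ z v) (algebraMap A B) (fun x : L => (1 : B) ⊗ₜ[A] x) := by
  refine ⟨(IsScalarTower.toAlgHom R A B).isAlgHomFun, ⟨tmul_add 1, fun r x => tmul_smul r 1 x⟩,
    fun x y => ?_, fun a x => ?_, fun x a => ?_⟩ <;> dsimp only
  · simp only [baseChangeBr_tmul, Derivation.map_one_eq_zero, mul_zero, zero_tmul, mul_one,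
      sub_zero, add_zero]
  · rw [smul_tmul', smul_eq_mul, mul_one, ← smul_tmul, Algebra.algebraMap_eq_smul_one]
  · rw [LinearMap.liftBaseChange_tmul_derivation_apply, one_mul, hω]

end IsLR

theorem stmt13_general (R : Type u) [CommRing R] (A : Type v) [CommRing A] [Bialgebra R A]
    -- `B` is `A ⊗[R] A` viewed as an `A`-algebra via the comultiplication `Δ`
    (B : Type v) [CommRing B] [Algebra R B] [Algebra A B] [IsScalarTower R A B]
    (L : Type v) [AddCommGroup L] [Module R L] [Module A L] [IsScalarTower R A L]
    (br : L → L → L) (an : L → A → A)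
    (h : IsLR R A L (fun a x => a • x) br an)
    -- the action `ω⊗` of `L` on `A ⊗ A ≅ B` by derivations
    (ω' : L → B → B)
    (hlin : ∀ x : L, IsLinearMap R (ω' x))
    (hlinx : ∀ u : B, IsLinearMap R fun x : L => ω' x u)
    (hder : ∀ (x : L) (u v : B), ω' x (u * v) = ω' x u * v + u * ω' x v)
    (hlie : ∀ (x y : L) (u : B), ω' (br x y) u = ω' x (ω' y u) - ω' y (ω' x u))
    -- `Δ` is `L`-equivariant
    (hequiv : ∀ (x : L) (a : A),
      ω' x (algebraMap A B a) = algebraMap A B (an x a))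
    -- `(aα)(b ⊗ c) = Δ(a) · α(b ⊗ c)`
    (hA : ∀ (a : A) (x : L) (u : B),
      ω' (a • x) u = algebraMap A B a * ω' x u) :
    ∃ (br' : (B ⊗[A] L) → (B ⊗[A] L) → (B ⊗[A] L))
      (an' : (B ⊗[A] L) → B → B),
      (∀ (u v : B) (α β : L),
        br' (u ⊗ₜ[A] α) (v ⊗ₜ[A] β) =
          (u * v) ⊗ₜ[A] br α β - (v * ω' β u) ⊗ₜ[A] α + (u * ω' α v) ⊗ₜ[A] β) ∧
      (∀ (u : B) (α : L) (v : B), an' (u ⊗ₜ[A] α) v = u * ω' α v) ∧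
      IsLR R B (B ⊗[A] L) (fun c z => c • z) br' an' ∧
      IsLRHom R (fun a x => a • x) br an (fun c z => c • z) br' an'
        (algebraMap A B) (fun x : L => (1 : B) ⊗ₜ[A] x) := by
  set ω := derivationAction ω' hlin (fun x y u => (hlinx u).map_add x y) hder hA
  have hω : ∀ x a, ω x (algebraMap A B a) = algebraMap A B (an x a) := hequiv
  have hbr : ∀ x y, ω (br x y) = ⁅ω x, ω y⁆ := fun x y =>
    Derivation.ext fun u => by rw [Derivation.commutator_apply]; exact hlie x y u
  exact ⟨fun z w => h.baseChangeBr ω hω z w, fun z v => ω.liftBaseChange B z v,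
    fun u v α β => rfl, ω.liftBaseChange_tmul_derivation_apply, h.baseChange ω hω hbr,
    h.isLRHom_baseChange ω hω⟩

/-- for a commutative bialgebra `A`, an `(R,A)`-Lie algebra `L`
and a `Δ`-equivariant action `ω⊗` of `L` on `A ⊗ A` by derivations satisfying
`(aα)(u) = Δ(a)·α(u)`, the induced module `L^⊗ = (A ⊗ A) ⊗[A] L` (the
`A`-algebra `B ≅ A ⊗ A` via `Δ`) acquires an `(R, A ⊗ A)`-Lie algebra
structure such that `(Δ, Δ ⊗ Id) : (A, L) → (A ⊗ A, L^⊗)` is a morphism of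
Lie-Rinehart algebras. -/
theorem stmt13 (R : Type u) [CommRing R] (A : Type v) [CommRing A] [Bialgebra R A]
    -- `B` is `A ⊗[R] A` viewed as an `A`-algebra via the comultiplication `Δ`
    (B : Type v) [CommRing B] [Algebra R B] [Algebra A B] [IsScalarTower R A B]
    [SMulCommClass A R B]
    (e : B ≃ₐ[R] A ⊗[R] A) (he : ∀ a : A, e (algebraMap A B a) = Bialgebra.comulAlgHom R A a)
    (L : Type v) [AddCommGroup L] [Module R L] [Module A L] [IsScalarTower R A L]
    (br : L → L → L) (an : L → A → A)
    (h : IsLR R A L (fun a x => a • x) br an)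
    -- the action `ω⊗` of `L` on `A ⊗ A ≅ B` by derivations
    (ω' : L → B → B)
    (hlin : ∀ x : L, IsLinearMap R (ω' x))
    (hlinx : ∀ u : B, IsLinearMap R fun x : L => ω' x u)
    (hder : ∀ (x : L) (u v : B), ω' x (u * v) = ω' x u * v + u * ω' x v)
    (hlie : ∀ (x y : L) (u : B), ω' (br x y) u = ω' x (ω' y u) - ω' y (ω' x u))
    -- `Δ` is `L`-equivariant
    (hequiv : ∀ (x : L) (a : A),
      ω' x (algebraMap A B a) = algebraMap A B (an x a))
    -- `(aα)(b ⊗ c) = Δ(a) · α(b ⊗ c)`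
    (hA : ∀ (a : A) (x : L) (u : B),
      ω' (a • x) u = algebraMap A B a * ω' x u) :
    ∃ (br' : (B ⊗[A] L) → (B ⊗[A] L) → (B ⊗[A] L))
      (an' : (B ⊗[A] L) → B → B),
      (∀ (u v : B) (α β : L),
        br' (u ⊗ₜ[A] α) (v ⊗ₜ[A] β) =
          (u * v) ⊗ₜ[A] br α β - (v * ω' β u) ⊗ₜ[A] α + (u * ω' α v) ⊗ₜ[A] β) ∧
      (∀ (u : B) (α : L) (v : B), an' (u ⊗ₜ[A] α) v = u * ω' α v) ∧
      IsLR R B (B ⊗[A] L) (fun c z => c • z) br' an' ∧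
      IsLRHom R (fun a x => a • x) br an (fun c z => c • z) br' an'
        (algebraMap A B) (fun x : L => (1 : B) ⊗ₜ[A] x) :=
  stmt13_general R A B L br an h ω' hlin hlinx hder hlie hequiv hA
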